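/- arXiv:1502.00367 — 2 statements merged into one kernel-verified Lean document; each statement's English description precedes it below -/
import Mathlib

section
/- The language L₂ = { w · (wᴿ)ₓ₃ · (w)ₓ₁₅ · (wᴿ)ₓ₅ : w a nonempty string over {1,2} } over the alphabet {1,2,3,6,5,10,15,30} is CFL-immune; that is, L₂ is infinite and no infinite subset of L₂ is a context-free language. -/
/-- Multiply every symbol (a natural number) of the string `u` by `c`. -/
def mulStr (c : ℕ) (u : List ℕ) : List ℕ := u.map (c * ·)

/-- The eight-symbol alphabet Σ = {1,2,3,6,5,10,15,30}. -/
def Sigma8 : Set ℕ := {1, 2, 3, 6, 5, 10, 15, 30}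

/-- The nested palindrome `w (wᴿ)ₓ₃ (w)ₓ₁₅ (wᴿ)ₓ₅`. -/
def nest (w : List ℕ) : List ℕ :=
  w ++ mulStr 3 w.reverse ++ mulStr 15 w ++ mulStr 5 w.reverse

/-- The test language L₂. -/
def L2 : Language ℕ :=
  {s | ∃ w : List ℕ, w ≠ [] ∧ (∀ a ∈ w, a = 1 ∨ a = 2) ∧ s = nest w}

/-- `L` is CFL-immune: `L` is infinite and no infinite subset of `L` is context-free. -/
def CFLImmune {T : Type} (L : Language T) : Prop :=
  Set.Infinite (L : Set (List T)) ∧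
    ∀ M : Language T, M ≤ L → Set.Infinite (M : Set (List T)) → ¬ M.IsContextFree

/-- `L`, a language over the (sub)alphabet `A ⊆ ℕ`, belongs to CFL/n with parallel
(length-respecting) advice: there are an alphabet `Γ`, an advice `h` with `|h n| = n`,
and a context-free `L'` over the product alphabet such that for every string `x` over `A`,
`x ∈ L` iff the componentwise pairing of `x` with `h |x|` is in `L'`. -/
def InCFLAdviceParallel (A : Set ℕ) (L : Language ℕ) : Prop :=
  ∃ (Γ : Type) (_ : Fintype Γ) (h : ℕ → List Γ) (L' : Language (ℕ × Γ)),
    (∀ n, (h n).length = n) ∧ L'.IsContextFree ∧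
    ∀ x : List ℕ, (∀ a ∈ x, a ∈ A) → (x ∈ L ↔ x.zip (h x.length) ∈ L')

/-- `L`, a language over the (sub)alphabet `A ⊆ ℕ`, belongs to (CFL/n)_serial
(Damm–Holzer style serial advice): there are an alphabet `Γ₀`, an advice `g` with
`|g n| = n`, and a context-free `L''` over the disjoint-union alphabet `Γ₀ ⊕ ℕ` such
that for every string `x` over `A`, `x ∈ L` iff `g |x| · x ∈ L''`. -/
def InCFLAdviceSerial (A : Set ℕ) (L : Language ℕ) : Prop :=
  ∃ (Γ₀ : Type) (_ : Fintype Γ₀) (g : ℕ → List Γ₀) (L'' : Language (Γ₀ ⊕ ℕ)),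
    (∀ n, (g n).length = n) ∧ L''.IsContextFree ∧
    ∀ x : List ℕ, (∀ a ∈ x, a ∈ A) →
      (x ∈ L ↔ (g x.length).map Sum.inl ++ x.map Sum.inr ∈ L'')

/-- The language L₂,₁. -/
def L21 : Language ℕ :=
  {s | ∃ w x : List ℕ, w ≠ [] ∧ (∀ a ∈ w, a = 1 ∨ a = 2) ∧
    x ≠ [] ∧ (∀ a ∈ x, a = 5 ∨ a = 10 ∨ a = 15 ∨ a = 30) ∧
    s = w ++ mulStr 3 w.reverse ++ x}

/-- The language L₂,₂. -/
def L22 : Language ℕ :=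
  {s | ∃ y : List ℕ, y ≠ [] ∧ (∀ a ∈ y, a = 1 ∨ a = 2 ∨ a = 3 ∨ a = 6) ∧
    s = y ++ mulStr 5 y.reverse}

/-!
A weak pumping lemma suffices: every long enough word `z = uvwxy` of a context-free language,
with `vx` nonempty, has `uv²wx²y` in the language as well. It follows from a derivation of `z`
with the fewest steps: a long yield forces some nonterminal `B` to derive `vBx`, and by
minimality `vx` is nonempty.

Every word of `L₂` is the concatenation of four blocks of equal length `|w|`, over the pairwise
disjoint alphabets `{1,2}`, `{3,6}`, `{15,30}` and `{5,10}`, in this order. If both `uvwxy` and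
`uv²wx²y` lie in `L₂`, then `v` (and likewise `x`) lies inside one block, since `vv` is a factor
of a word whose blocks are ordered. So some block is untouched by pumping and keeps its length,
while the total length grows by `|vx|`; hence `vx` is empty. An infinite subset of `L₂` has
arbitrarily long words, as the alphabet is finite, so it cannot be context-free.
-/

namespace ContextFreeRule

variable {T N : Type*} {r : ContextFreeRule T N}

theorem Rewrites.append_cases {u v w : List (Symbol T N)} (h : r.Rewrites (u ++ v) w) :
    (∃ u', r.Rewrites u u' ∧ w = u' ++ v) ∨ (∃ v', r.Rewrites v v' ∧ w = u ++ v') := by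
  induction u generalizing w with
  | nil => exact Or.inr ⟨w, h, rfl⟩
  | cons x u ih =>
    rw [List.cons_append] at h
    cases h with
    | head => exact Or.inl ⟨r.output ++ u, .head u, by simp⟩
    | cons _ h =>
      rcases ih h with ⟨u', hu, rfl⟩ | ⟨v', hv, rfl⟩
      · exact Or.inl ⟨x :: u', hu.cons x, rfl⟩
      · exact Or.inr ⟨v', hv, rfl⟩

end ContextFreeRule

namespace ContextFreeGrammar

variable {T : Type*} {g : ContextFreeGrammar T}

theorem Produces.append_cases {u v w : List (Symbol T g.NT)} (h : g.Produces (u ++ v) w) :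
    (∃ u', g.Produces u u' ∧ w = u' ++ v) ∨ (∃ v', g.Produces v v' ∧ w = u ++ v') := by
  obtain ⟨r, hr, h⟩ := h
  exact h.append_cases.imp (fun ⟨u', hu, e⟩ => ⟨u', ⟨r, hr, hu⟩, e⟩)
    (fun ⟨v', hv, e⟩ => ⟨v', ⟨r, hr, hv⟩, e⟩)

def DerivesIn (g : ContextFreeGrammar T) :
    ℕ → List (Symbol T g.NT) → List (Symbol T g.NT) → Prop
  | 0, u, v => u = v
  | n + 1, u, v => ∃ w, g.Produces u w ∧ g.DerivesIn n w v

section DerivesIn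

variable {m n : ℕ} {u v w : List (Symbol T g.NT)}

theorem DerivesIn.trans (huv : g.DerivesIn m u v) (hvw : g.DerivesIn n v w) :
    g.DerivesIn (m + n) u w := by
  induction m generalizing u with
  | zero => cases huv; simpa using hvw
  | succ m ih =>
    obtain ⟨s, hus, hsv⟩ := huv
    rw [Nat.add_right_comm]
    exact ⟨s, hus, ih hsv⟩

theorem DerivesIn.derives (h : g.DerivesIn n u v) : g.Derives u v := by
  induction n generalizing u with
  | zero => cases h; rfl
  | succ n ih => obtain ⟨w, huw, hwv⟩ := h; exact huw.trans_derives (ih hwv)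

theorem Derives.exists_derivesIn (h : g.Derives u v) : ∃ n, g.DerivesIn n u v := by
  induction h using Relation.ReflTransGen.head_induction_on with
  | refl => exact ⟨0, rfl⟩
  | head huw _ ih => obtain ⟨n, hn⟩ := ih; exact ⟨n + 1, _, huw, hn⟩

theorem DerivesIn.append_left (h : g.DerivesIn n u v) (p : List (Symbol T g.NT)) :
    g.DerivesIn n (p ++ u) (p ++ v) := by
  induction n generalizing u with
  | zero => cases h; rfl
  | succ n ih => obtain ⟨w, huw, hwv⟩ := h; exact ⟨p ++ w, huw.append_left p, ih hwv⟩

theorem DerivesIn.append_right (h : g.DerivesIn n u v) (p : List (Symbol T g.NT)) :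
    g.DerivesIn n (u ++ p) (v ++ p) := by
  induction n generalizing u with
  | zero => cases h; rfl
  | succ n ih => obtain ⟨w, huw, hwv⟩ := h; exact ⟨w ++ p, huw.append_right p, ih hwv⟩

theorem DerivesIn.split_append (h : g.DerivesIn n (u ++ v) w) :
    ∃ n₁ n₂ w₁ w₂, n₁ + n₂ = n ∧ w = w₁ ++ w₂ ∧ g.DerivesIn n₁ u w₁ ∧ g.DerivesIn n₂ v w₂ := by
  induction n generalizing u v with
  | zero => exact ⟨0, 0, u, v, rfl, h.symm, rfl, rfl⟩
  | succ n ih =>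
    obtain ⟨s, hs, hsw⟩ := h
    rcases hs.append_cases with ⟨u', hu, rfl⟩ | ⟨v', hv, rfl⟩
    · obtain ⟨n₁, n₂, w₁, w₂, hn, rfl, h₁, h₂⟩ := ih hsw
      exact ⟨n₁ + 1, n₂, w₁, w₂, by omega, rfl, ⟨u', hu, h₁⟩, h₂⟩
    · obtain ⟨n₁, n₂, w₁, w₂, hn, rfl, h₁, h₂⟩ := ih hsw
      exact ⟨n₁, n₂ + 1, w₁, w₂, by omega, rfl, h₁, ⟨v', hv, h₂⟩⟩

theorem DerivesIn.eq_of_terminal {z : List T} (h : g.DerivesIn n (z.map .terminal) v) :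
    v = z.map .terminal := by
  cases n with
  | zero => exact h.symm
  | succ n =>
    obtain ⟨w, hw, -⟩ := h
    simpa using hw.exists_nonterminal_input_mem

theorem DerivesIn.exists_rule {A : g.NT} {z : List T}
    (h : g.DerivesIn n [.nonterminal A] (z.map .terminal)) :
    ∃ m, n = m + 1 ∧ ∃ r ∈ g.rules, r.input = A ∧ g.DerivesIn m r.output (z.map .terminal) := by
  cases n with
  | zero => cases z <;> simp [DerivesIn] at h
  | succ m =>
    obtain ⟨w, ⟨r, hr, hrw⟩, hw⟩ := h
    cases hrw with
    | head => exact ⟨m, rfl, r, hr, rfl, by simpa using hw⟩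
    | cons _ h => cases h

end DerivesIn

def Through (g : ContextFreeGrammar T) (P : g.NT → List T → ℕ → Prop) (n : ℕ)
    (α : List (Symbol T g.NT)) (z : List T) : Prop :=
  ∃ B u w y a c, z = u ++ w ++ y ∧
    g.DerivesIn a α (u.map .terminal ++ [.nonterminal B] ++ y.map .terminal) ∧
    P B w c ∧ a + c ≤ n

def Pump (g : ContextFreeGrammar T) (B : g.NT) (z : List T) (n : ℕ) : Prop :=
  ∃ v w x b c, z = v ++ w ++ x ∧
    g.DerivesIn b [.nonterminal B] (v.map .terminal ++ [.nonterminal B] ++ x.map .terminal) ∧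
    g.DerivesIn c [.nonterminal B] (w.map .terminal) ∧ 0 < b ∧ b + c ≤ n

def HitsOrPumps (g : ContextFreeGrammar T) (S : Finset g.NT) (B : g.NT) (z : List T)
    (n : ℕ) : Prop :=
  (B ∈ S ∧ g.DerivesIn n [.nonterminal B] (z.map .terminal)) ∨ g.Pump B z n

section Through

variable {P Q : g.NT → List T → ℕ → Prop} {m n : ℕ} {α β : List (Symbol T g.NT)}
  {z z' : List T}

theorem Through.mono (hPQ : ∀ B w c, P B w c → Q B w c) (h : g.Through P n α z) :
    g.Through Q n α z := by
  obtain ⟨B, u, w, y, a, c, rfl, hα, hP, hn⟩ := h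
  exact ⟨B, u, w, y, a, c, rfl, hα, hPQ B w c hP, hn⟩

theorem Through.self {A : g.NT} (h : P A z n) : g.Through P n [.nonterminal A] z :=
  ⟨A, [], z, [], 0, n, by simp, by simp [DerivesIn], h, by omega⟩

theorem Through.append_right (h : g.Through P n α z)
    (hβ : g.DerivesIn m β (z'.map .terminal)) : g.Through P (n + m) (α ++ β) (z ++ z') := by
  obtain ⟨B, u, w, y, a, c, rfl, hα, hP, hn⟩ := h
  refine ⟨B, u, w, y ++ z', a + m, c, by simp, ?_, hP, by omega⟩
  simpa using (hα.append_right β).trans (hβ.append_left _)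

theorem Through.append_left (hβ : g.DerivesIn m β (z'.map .terminal))
    (h : g.Through P n α z) : g.Through P (m + n) (β ++ α) (z' ++ z) := by
  obtain ⟨B, u, w, y, a, c, rfl, hα, hP, hn⟩ := h
  refine ⟨B, z' ++ u, w, y, m + a, c, by simp, ?_, hP, by omega⟩
  simpa using (hβ.append_right α).trans (hα.append_left _)

theorem length_le_mul_or_through_of_forall_mem {K : ℕ}
    (hα : ∀ s ∈ α, ∀ m ≤ n, ∀ z, g.DerivesIn m [s] (z.map .terminal) →
      z.length ≤ K ∨ g.Through P m [s] z)
    (h : g.DerivesIn n α (z.map .terminal)) :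
    z.length ≤ α.length * K ∨ g.Through P n α z := by
  induction α generalizing n z with
  | nil =>
    obtain rfl : z = [] := by simpa using (DerivesIn.eq_of_terminal (z := []) h).symm
    simp
  | cons s α ih =>
    obtain ⟨n₁, n₂, w₁, w₂, rfl, hw, h₁, h₂⟩ := DerivesIn.split_append (u := [s]) h
    obtain ⟨z₁, z₂, rfl, rfl, rfl⟩ := List.map_eq_append_iff.mp hw
    rcases hα s (by simp) n₁ (by omega) z₁ h₁ with hz₁ | hz₁
    · rcases ih (fun s hs m hm => hα s (by simp [hs]) m (by omega)) h₂ with hz₂ | hz₂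
      · left; simp only [List.length_append, List.length_cons, add_one_mul]; omega
      · exact Or.inr (hz₂.append_left h₁)
    · exact Or.inr (hz₁.append_right h₂)

end Through

theorem Through.of_rule [DecidableEq g.NT] {S : Finset g.NT} {r : ContextFreeRule T g.NT}
    {m : ℕ} {z : List T} (hr : r ∈ g.rules)
    (h : g.Through (g.HitsOrPumps (insert r.input S)) m r.output z) :
    g.Through (g.HitsOrPumps S) (m + 1) [.nonterminal r.input] z := by
  obtain ⟨B, u, w, y, a, c, rfl, hctx, hP, hn⟩ := h
  have hstep : g.DerivesIn (1 + a) [.nonterminal r.input]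
      (u.map .terminal ++ [.nonterminal B] ++ y.map .terminal) :=
    DerivesIn.trans (m := 1) ⟨r.output, ⟨r, hr, .input_output⟩, rfl⟩ hctx
  rcases hP with ⟨hB, hw⟩ | hpump
  · rcases Finset.mem_insert.mp hB with rfl | hBS
    · -- reaching `r.input` again closes a loop
      exact Through.self (Or.inr ⟨u, w, y, 1 + a, c, rfl, hstep, hw, by omega, by omega⟩)
    · exact ⟨B, u, w, y, 1 + a, c, rfl, hstep, Or.inl ⟨hBS, hw⟩, by omega⟩
  · exact ⟨B, u, w, y, 1 + a, c, rfl, hstep, Or.inr hpump, by omega⟩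

/-- `S` collects the nonterminals already expanded on the path from the root. Unless the
derivation from `A` reaches one of them again or contains a loop, each level down uses up one
more of the `k` nonterminals occurring in rules, so the yield has length at most
`M ^ (k - #S)`. -/
theorem length_le_or_through [DecidableEq g.NT] {M : ℕ} (hM₀ : 0 < M)
    (hM : ∀ r ∈ g.rules, r.output.length ≤ M) (n : ℕ) {S : Finset g.NT}
    (hS : S ⊆ g.rules.image ContextFreeRule.input) {A : g.NT} {z : List T}
    (h : g.DerivesIn n [.nonterminal A] (z.map .terminal)) :
    z.length ≤ M ^ ((g.rules.image ContextFreeRule.input).card - S.card) ∨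
      g.Through (g.HitsOrPumps S) n [.nonterminal A] z := by
  induction n using Nat.strong_induction_on generalizing S A z with
  | _ n ih =>
  by_cases hA : A ∈ S
  · exact Or.inr (Through.self (Or.inl ⟨hA, h⟩))
  obtain ⟨m, rfl, r, hr, rfl, hm⟩ := h.exists_rule
  set k := (g.rules.image ContextFreeRule.input).card
  have hS' : insert r.input S ⊆ g.rules.image ContextFreeRule.input :=
    Finset.insert_subset (Finset.mem_image_of_mem _ hr) hS
  have hcard : (insert r.input S).card = S.card + 1 := Finset.card_insert_of_notMem hA
  have hk : S.card + 1 ≤ k := hcard ▸ Finset.card_le_card hS'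
  have hsym : ∀ s ∈ r.output, ∀ m' ≤ m, ∀ z', g.DerivesIn m' [s] (z'.map .terminal) →
      z'.length ≤ M ^ (k - (S.card + 1)) ∨
        g.Through (g.HitsOrPumps (insert r.input S)) m' [s] z' := by
    rintro (t | B) - m' hm' z' h'
    · left
      obtain ⟨t', rfl, -⟩ := List.map_eq_singleton_iff.mp (DerivesIn.eq_of_terminal (z := [t]) h')
      exact Nat.one_le_pow _ _ hM₀
    · simpa [hcard] using ih m' (by omega) hS' h'
  rcases length_le_mul_or_through_of_forall_mem hsym hm with hz | hz
  · left
    calc z.length ≤ r.output.length * M ^ (k - (S.card + 1)) := hz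
      _ ≤ M * M ^ (k - (S.card + 1)) := Nat.mul_le_mul_right _ (hM r hr)
      _ = M ^ (k - S.card) := by rw [← pow_succ']; congr 1; omega
  · exact Or.inr (hz.of_rule hr)

theorem Through.pump {n : ℕ} {α : List (Symbol T g.NT)} {z : List T}
    (h : g.Through g.Pump n α z) (hmin : ∀ m < n, ¬ g.DerivesIn m α (z.map .terminal)) :
    ∃ u v w x y, z = u ++ v ++ w ++ x ++ y ∧ v ++ x ≠ [] ∧
      g.Derives α ((u ++ v ++ v ++ w ++ x ++ x ++ y).map .terminal) := by
  obtain ⟨B, u, _, y, a, _, rfl, hctx, ⟨v, w, x, b, c, rfl, hloop, hw, hb, hbc⟩, hn⟩ := h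
  refine ⟨u, v, w, x, y, by simp, ?_, ?_⟩
  · -- otherwise skipping the loop would give a shorter derivation of `z`
    intro hvx
    obtain ⟨rfl, rfl⟩ := List.append_eq_nil_iff.mp hvx
    exact hmin (a + c) (by omega)
      (by simpa using hctx.trans ((hw.append_left _).append_right _))
  · have hB : g.Derives [.nonterminal B] ((v ++ v ++ w ++ x ++ x).map .terminal) := by
      have h₀ := hloop.derives
      have h₁ := (hloop.derives.append_left (v.map .terminal)).append_right (x.map .terminal)
      have h₂ := (hw.derives.append_left ((v ++ v).map .terminal)).append_right
        ((x ++ x).map .terminal)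
      simp only [List.map_append, List.append_assoc] at h₀ h₁ h₂ ⊢
      exact h₀.trans (h₁.trans h₂)
    simpa using hctx.derives.trans ((hB.append_left _).append_right _)

end ContextFreeGrammar

theorem Language.IsContextFree.exists_pumping {T : Type*} {L : Language T}
    (hL : L.IsContextFree) :
    ∃ K, ∀ z ∈ L, K < z.length → ∃ u v w x y, z = u ++ v ++ w ++ x ++ y ∧ v ++ x ≠ [] ∧
      u ++ v ++ v ++ w ++ x ++ x ++ y ∈ L := by
  classical
  obtain ⟨g, rfl⟩ := hL
  set M := (g.rules.sup fun r => r.output.length) + 1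
  have hM : ∀ r ∈ g.rules, r.output.length ≤ M :=
    fun r hr => (Finset.le_sup (f := fun r => r.output.length) hr).trans (Nat.le_succ _)
  refine ⟨M ^ (g.rules.image ContextFreeRule.input).card, fun z hz hlong => ?_⟩
  have hex := ((g.mem_language_iff z).mp hz).exists_derivesIn
  rcases g.length_le_or_through (Nat.succ_pos _) hM (Nat.find hex) (Finset.empty_subset _)
    (Nat.find_spec hex) with hshort | hthrough
  · simp only [Finset.card_empty, Nat.sub_zero] at hshort
    exact absurd hshort (not_le.mpr hlong)
  · obtain ⟨u, v, w, x, y, rfl, hvx, hpump⟩ :=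
      (hthrough.mono fun _ _ _ h => h.resolve_left (by simp)).pump fun m hm => Nat.find_min hex hm
    exact ⟨u, v, w, x, y, rfl, hvx, (g.mem_language_iff _).mpr hpump⟩

theorem Set.Finite.setOf_length_le_forall_mem {α : Type*} {s : Set α} (hs : s.Finite) (n : ℕ) :
    {l : List α | l.length ≤ n ∧ ∀ a ∈ l, a ∈ s}.Finite := by
  have := hs.to_subtype
  refine ((List.finite_length_le s n).image (List.map Subtype.val)).subset ?_
  rintro l ⟨hl, hls⟩
  lift l to List s using hls
  exact ⟨l, by simpa using hl, rfl⟩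

theorem List.exists_forall_eq_of_pairwise_append_self {α : Type*} [PartialOrder α] [Inhabited α]
    {l : List α} (h : (l ++ l).Pairwise (· ≤ ·)) : ∃ b, ∀ a ∈ l, a = b := by
  cases l with
  | nil => simp
  | cons c t =>
    have cross := (List.pairwise_append.mp h).2.2
    exact ⟨c, fun a ha => le_antisymm (cross a ha c (by simp)) (cross c (by simp) a ha)⟩

/-- The symbols `1, 2 ↦ 0`, `3, 6 ↦ 1`, `15, 30 ↦ 2` and `5, 10 ↦ 3`, numbering the four blocks
in the order in which they occur in `nest w`. -/
def nestBlock (a : ℕ) : Fin 4 :=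
  if a ∣ 2 then 0 else if a ∣ 6 then 1 else if 15 ∣ a then 2 else 3

theorem map_nestBlock_nest {w : List ℕ} (hw : ∀ a ∈ w, a = 1 ∨ a = 2) :
    (nest w).map nestBlock = List.replicate w.length 0 ++ List.replicate w.length 1 ++
      List.replicate w.length 2 ++ List.replicate w.length 3 := by
  have hblock : ∀ (c : ℕ) (i : Fin 4) (u : List ℕ), (∀ b ∈ u, b = 1 ∨ b = 2) →
      nestBlock c = i → nestBlock (c * 2) = i →
        (mulStr c u).map nestBlock = List.replicate u.length i := by
    intro c i u hu h1 h2
    rw [mulStr, List.map_map, List.map_eq_replicate_iff]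
    intro b hb
    rcases hu b hb with rfl | rfl <;> simpa
  have hwr : ∀ b ∈ w.reverse, b = 1 ∨ b = 2 := fun b hb => hw b (List.mem_reverse.mp hb)
  have h0 : w.map nestBlock = List.replicate w.length 0 := by
    simpa [mulStr] using hblock 1 0 w hw rfl rfl
  rw [nest, List.map_append, List.map_append, List.map_append, h0,
    hblock 3 1 _ hwr rfl rfl, hblock 15 2 w hw rfl rfl, hblock 5 3 _ hwr rfl rfl,
    List.length_reverse]

theorem mem_Sigma8_of_mem_L2 {s : List ℕ} (hs : s ∈ L2) : ∀ a ∈ s, a ∈ Sigma8 := by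
  obtain ⟨w, -, hw, rfl⟩ := hs
  intro a ha
  simp only [nest, mulStr, List.mem_append, List.mem_map, List.mem_reverse] at ha
  grind [Sigma8]

theorem length_nest (w : List ℕ) : (nest w).length = 4 * w.length := by
  simp [nest, mulStr]; omega

theorem L2_infinite : (L2 : Set (List ℕ)).Infinite :=
  Set.infinite_of_injective_forall_mem (f := fun n => nest (List.replicate (n + 1) 1))
    (fun a b hab => by simpa [length_nest] using congrArg List.length hab)
    (fun n => ⟨_, by simp, fun _ ha => Or.inl (List.eq_of_mem_replicate ha), rfl⟩)

theorem count_map_nestBlock_nest {w : List ℕ} (hw : ∀ a ∈ w, a = 1 ∨ a = 2) (j : Fin 4) :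
    ((nest w).map nestBlock).count j = w.length := by
  rw [map_nestBlock_nest hw]
  fin_cases j <;> simp [List.count_replicate]

theorem pairwise_map_nestBlock_nest {w : List ℕ} (hw : ∀ a ∈ w, a = 1 ∨ a = 2) :
    ((nest w).map nestBlock).Pairwise (· ≤ ·) := by
  rw [map_nestBlock_nest hw]
  simp only [List.pairwise_append, List.pairwise_replicate, List.mem_append, List.mem_replicate]
  grind

theorem eq_nil_of_pump_mem_L2 {u v w x y : List ℕ} (h : u ++ v ++ w ++ x ++ y ∈ L2)
    (h' : u ++ v ++ v ++ w ++ x ++ x ++ y ∈ L2) : v ++ x = [] := by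
  obtain ⟨w₀, -, hw₀, e₀⟩ := h
  obtain ⟨w₁, -, hw₁, e₁⟩ := h'
  have hsorted := pairwise_map_nestBlock_nest hw₁
  rw [← e₁] at hsorted
  have hvv : v.map nestBlock ++ v.map nestBlock <:+:
      (u ++ v ++ v ++ w ++ x ++ x ++ y).map nestBlock :=
    ⟨u.map nestBlock, (w ++ x ++ x ++ y).map nestBlock, by simp⟩
  have hxx : x.map nestBlock ++ x.map nestBlock <:+:
      (u ++ v ++ v ++ w ++ x ++ x ++ y).map nestBlock :=
    ⟨(u ++ v ++ v ++ w).map nestBlock, y.map nestBlock, by simp⟩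
  obtain ⟨bv, hv⟩ := List.exists_forall_eq_of_pairwise_append_self (hsorted.sublist hvv.sublist)
  obtain ⟨bx, hx⟩ := List.exists_forall_eq_of_pairwise_append_self (hsorted.sublist hxx.sublist)
  obtain ⟨j, hjv, hjx⟩ : ∃ j : Fin 4, j ≠ bv ∧ j ≠ bx := by
    have : ∀ a b : Fin 4, ∃ j, j ≠ a ∧ j ≠ b := by decide
    exact this bv bx
  have hcv : (v.map nestBlock).count j = 0 := List.count_eq_zero.mpr fun hj => hjv (hv j hj)
  have hcx : (x.map nestBlock).count j = 0 := List.count_eq_zero.mpr fun hj => hjx (hx j hj)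
  have hc₀ := count_map_nestBlock_nest hw₀ j
  have hc₁ := count_map_nestBlock_nest hw₁ j
  have hl₀ := length_nest w₀
  have hl₁ := length_nest w₁
  rw [← e₀] at hc₀ hl₀
  rw [← e₁] at hc₁ hl₁
  simp only [List.map_append, List.count_append, List.length_append] at hc₀ hc₁ hl₀ hl₁
  rw [← List.length_eq_zero_iff, List.length_append]
  omega

/-- L₂ is CFL-immune. -/
theorem L2_CFLImmune : CFLImmune L2 := by
  refine ⟨L2_infinite, fun M hML hM hCF => ?_⟩
  obtain ⟨K, hK⟩ := hCF.exists_pumping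
  obtain ⟨z, hzM, hzK⟩ : ∃ z ∈ M, K < z.length := by
    by_contra! hshort
    have hSigma8 : Sigma8.Finite := by unfold Sigma8; exact Set.toFinite _
    exact hM ((hSigma8.setOf_length_le_forall_mem K).subset
      fun z hz => ⟨hshort z hz, mem_Sigma8_of_mem_L2 (hML hz)⟩)
  obtain ⟨u, v, w, x, y, rfl, hvx, hpump⟩ := hK z hzM hzK
  exact hvx (eq_nil_of_pump_mem_L2 (hML hzM) (hML hpump))
end

section
/- The language L_3eq = { 0ⁿ 1ⁿ 2ⁿ : n ∈ ℕ, n ≥ 1 } over the alphabet {0,1,2} is CFL-immune; that is, L_3eq is infinite and no infinite subset of L_3eq is a context-free language. -/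
/-!
In a parse tree of a long word some path is long, so a nonterminal `B` repeats on it:
`S ⇒* u B y`, `B ⇒* v B x`, `B ⇒* m`. In a parse tree with the fewest rule applications `v ++ x`
is nonempty, since otherwise cutting out the loop gives a smaller tree; and `u v² m x² y` is
again generated. Any infinite context-free subset of `L3eq` contains such a long word. But the
pumped word is sorted, so `v` and `x` each consist of a single repeated letter, hence some letter
occurs in neither; pumping leaves its count unchanged while raising another, so the pumped word
is not of the form `0ⁿ1ⁿ2ⁿ`.
-/

namespace ContextFreeGrammar

open Symbol

variable {T : Type*} {g : ContextFreeGrammar T}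

/-- `ParseForest g l w d n`: the symbols `l` derive `w` by a forest of parse trees of depth `d`
with `n` rule applications in total. -/
inductive ParseForest (g : ContextFreeGrammar T) :
    List (Symbol T g.NT) → List T → ℕ → ℕ → Prop
  | nil : ParseForest g [] [] 0 0
  | consTerminal {l w d n} (t : T) (h : ParseForest g l w d n) :
      ParseForest g (terminal t :: l) (t :: w) d n
  | consNonterminal {r : ContextFreeRule T g.NT} {w d n l w' d' n'} (hr : r ∈ g.rules)
      (h : ParseForest g r.output w d n) (h' : ParseForest g l w' d' n') :
      ParseForest g (nonterminal r.input :: l) (w ++ w') (max (d + 1) d') (n + 1 + n')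

namespace ParseForest

theorem append {l₁ l₂ w₁ w₂ d₁ d₂ n₁ n₂} (h₁ : ParseForest g l₁ w₁ d₁ n₁)
    (h₂ : ParseForest g l₂ w₂ d₂ n₂) : ∃ d, ParseForest g (l₁ ++ l₂) (w₁ ++ w₂) d (n₁ + n₂) := by
  induction h₁ with
  | nil => exact ⟨d₂, by simpa using h₂⟩
  | consTerminal t _ ih =>
    obtain ⟨d, h⟩ := ih
    exact ⟨d, h.consTerminal t⟩
  | consNonterminal hr h _ _ ih =>
    obtain ⟨d, h'⟩ := ih
    exact ⟨_, by
      rw [List.cons_append, List.append_assoc, add_assoc _ _ n₂]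
      exact .consNonterminal hr h h'⟩

theorem singleton {r : ContextFreeRule T g.NT} {w d n} (hr : r ∈ g.rules)
    (h : ParseForest g r.output w d n) :
    ParseForest g [nonterminal r.input] w (d + 1) (n + 1) := by
  simpa using ParseForest.consNonterminal hr h .nil

theorem singleton_inv {A : g.NT} {w d n} (h : ParseForest g [nonterminal A] w d n) :
    ∃ r ∈ g.rules, r.input = A ∧
      ∃ d₀ n₀, ParseForest g r.output w d₀ n₀ ∧ d = d₀ + 1 ∧ n = n₀ + 1 := by
  cases h with
  | consNonterminal hr h h' =>
    cases h'
    exact ⟨_, hr, rfl, _, _, by simpa using h, by omega, by omega⟩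

theorem exists_of_append {l₁ l₂ : List (Symbol T g.NT)} {w d n}
    (h : ParseForest g (l₁ ++ l₂) w d n) :
    ∃ w₁ w₂ d₁ n₁ d₂ n₂, w = w₁ ++ w₂ ∧ n = n₁ + n₂ ∧
      ParseForest g l₁ w₁ d₁ n₁ ∧ ParseForest g l₂ w₂ d₂ n₂ := by
  induction l₁ generalizing w d n with
  | nil => exact ⟨[], w, 0, 0, d, n, rfl, by omega, .nil, h⟩
  | cons s l₁ ih =>
    rw [List.cons_append] at h
    cases h with
    | consTerminal t h =>
      obtain ⟨w₁, w₂, d₁, n₁, d₂, n₂, rfl, rfl, h₁, h₂⟩ := ih h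
      exact ⟨t :: w₁, w₂, d₁, n₁, d₂, n₂, rfl, rfl, h₁.consTerminal t, h₂⟩
    | consNonterminal hr hout h =>
      obtain ⟨w₁, w₂, d₁, n₁, d₂, n₂, rfl, rfl, h₁, h₂⟩ := ih h
      exact ⟨_ ++ w₁, w₂, _, _, d₂, n₂, by rw [List.append_assoc], by omega,
        .consNonterminal hr hout h₁, h₂⟩

theorem map_terminal (w : List T) : ParseForest g (w.map terminal) w 0 0 := by
  induction w with
  | nil => exact .nil
  | cons t w ih => exact ih.consTerminal t

theorem derives {l w d n} (h : ParseForest g l w d n) : g.Derives l (w.map terminal) := by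
  induction h with
  | nil => exact .refl []
  | consTerminal t _ ih => simpa using ih.append_left [terminal t]
  | consNonterminal hr _ _ ih ih' =>
    refine .head ⟨_, hr, ContextFreeRule.Rewrites.head _⟩ ?_
    rw [List.map_append]
    exact (ih.append_right _).trans (ih'.append_left _)

end ParseForest

theorem derives_map_terminal_iff {l : List (Symbol T g.NT)} {w : List T} :
    g.Derives l (w.map terminal) ↔ ∃ d n, ParseForest g l w d n := by
  refine ⟨fun h => ?_, fun ⟨_, _, h⟩ => h.derives⟩
  induction h using Relation.ReflTransGen.head_induction_on with
  | refl => exact ⟨0, 0, .map_terminal w⟩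
  | head hp _ ih =>
    obtain ⟨d, n, h⟩ := ih
    obtain ⟨r, hr, hrw⟩ := hp
    obtain ⟨p, q, rfl, rfl⟩ := hrw.exists_parts
    rw [List.append_assoc] at h
    obtain ⟨w₁, w', d₁, n₁, d', n', rfl, rfl, h₁, h'⟩ := h.exists_of_append
    obtain ⟨w₂, w₃, d₂, n₂, d₃, n₃, rfl, rfl, h₂, h₃⟩ := h'.exists_of_append
    obtain ⟨_, h₂₃⟩ := (ParseForest.singleton hr h₂).append h₃
    obtain ⟨_, h⟩ := h₁.append h₂₃
    rw [List.append_assoc]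
    exact ⟨_, _, h⟩

theorem mem_language_iff_exists_parseForest {w : List T} :
    w ∈ g.language ↔ ∃ d n, ParseForest g [nonterminal g.initial] w d n := by
  rw [mem_language_iff, derives_map_terminal_iff]

def branchingBound (g : ContextFreeGrammar T) : ℕ :=
  g.rules.sup (·.output.length) + 1

theorem one_le_branchingBound : 1 ≤ g.branchingBound := Nat.le_add_left 1 _

theorem ParseForest.length_le {l w d n} (h : ParseForest g l w d n) :
    w.length ≤ l.length * g.branchingBound ^ d := by
  have hb : 1 ≤ g.branchingBound := one_le_branchingBound
  induction h with
  | nil => simp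
  | @consTerminal l w d n t _ ih =>
    have := Nat.one_le_pow d _ hb
    rw [List.length_cons, List.length_cons, Nat.succ_mul]
    omega
  | @consNonterminal r w d n l w' d' n' hr _ _ ih ih' =>
    have hw : w.length ≤ g.branchingBound ^ max (d + 1) d' :=
      calc w.length ≤ r.output.length * g.branchingBound ^ d := ih
        _ ≤ g.branchingBound * g.branchingBound ^ d :=
          Nat.mul_le_mul_right _ ((Finset.le_sup (f := (·.output.length)) hr).trans
            (Nat.le_succ _))
        _ = g.branchingBound ^ (d + 1) := (pow_succ' _ _).symm
        _ ≤ g.branchingBound ^ max (d + 1) d' := Nat.pow_le_pow_right hb (le_max_left _ _)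
    have hw' : w'.length ≤ l.length * g.branchingBound ^ max (d + 1) d' :=
      ih'.trans (Nat.mul_le_mul_left _ (Nat.pow_le_pow_right hb (le_max_right _ _)))
    rw [List.length_append, List.length_cons, Nat.succ_mul]
    omega

theorem ParseForest.exists_deepest {l w d n} (h : ParseForest g l w d n) (hd : d ≠ 0) :
    ∃ l₁ l₂ B w₁ wm w₂ nm d₁ n₁ d₂ n₂, l = l₁ ++ nonterminal B :: l₂ ∧ w = w₁ ++ wm ++ w₂ ∧
      n = n₁ + nm + n₂ ∧ ParseForest g [nonterminal B] wm d nm ∧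
      ParseForest g l₁ w₁ d₁ n₁ ∧ ParseForest g l₂ w₂ d₂ n₂ := by
  induction h with
  | nil => exact absurd rfl hd
  | consTerminal t _ ih =>
    obtain ⟨l₁, l₂, B, w₁, wm, w₂, nm, d₁, n₁, d₂, n₂, rfl, rfl, rfl, hm, h₁, h₂⟩ := ih hd
    exact ⟨terminal t :: l₁, l₂, B, t :: w₁, wm, w₂, nm, d₁, n₁, d₂, n₂,
      rfl, rfl, rfl, hm, h₁.consTerminal t, h₂⟩
  | @consNonterminal r w d n l w' d' n' hr h h' _ ih' =>
    rcases le_or_gt d' (d + 1) with hle | hlt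
    · refine ⟨[], l, r.input, [], w, w', n + 1, 0, 0, d', n', rfl, rfl, by omega, ?_, .nil, h'⟩
      rw [max_eq_left hle]
      exact .singleton hr h
    · obtain ⟨l₁, l₂, B, w₁, wm, w₂, nm, d₁, n₁, d₂, n₂, rfl, rfl, rfl, hm, h₁, h₂⟩ :=
        ih' (by omega)
      refine ⟨nonterminal r.input :: l₁, l₂, B, w ++ w₁, wm, w₂, nm, _, _, d₂, n₂,
        rfl, by simp, by omega, ?_, .consNonterminal hr h h₁, h₂⟩
      rwa [max_eq_right hlt.le]

/-- `ParseContext g A B v x k`: a parse tree rooted at `A` with a single unexpanded leaf `B`,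
whose yield is `v ++ [B] ++ x` and which has `k` rule applications. -/
inductive ParseContext (g : ContextFreeGrammar T) : g.NT → g.NT → List T → List T → ℕ → Prop
  | refl (A : g.NT) : ParseContext g A A [] [] 0
  | step {r : ContextFreeRule T g.NT} {l₁ l₂ : List (Symbol T g.NT)} {B C : g.NT}
      {v₁ x₁ v₂ x₂ : List T} {d₁ d₂ n₁ n₂ k : ℕ} (hr : r ∈ g.rules)
      (hout : r.output = l₁ ++ nonterminal B :: l₂)
      (h₁ : ParseForest g l₁ v₁ d₁ n₁) (h₂ : ParseForest g l₂ x₁ d₂ n₂)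
      (h : ParseContext g B C v₂ x₂ k) :
      ParseContext g r.input C (v₁ ++ v₂) (x₂ ++ x₁) (1 + n₁ + n₂ + k)

namespace ParseContext

theorem trans {A B C v x k v' x' k'} (h : ParseContext g A B v x k)
    (h' : ParseContext g B C v' x' k') : ParseContext g A C (v ++ v') (x' ++ x) (k + k') := by
  induction h with
  | refl => simpa using h'
  | step hr hout h₁ h₂ _ ih =>
    rw [List.append_assoc, ← List.append_assoc x']
    convert ParseContext.step hr hout h₁ h₂ (ih h') using 1
    omega

theorem plug {A B v x k m dm nm} (h : ParseContext g A B v x k)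
    (hm : ParseForest g [nonterminal B] m dm nm) :
    ∃ d, ParseForest g [nonterminal A] (v ++ m ++ x) d (k + nm) := by
  induction h with
  | refl => exact ⟨dm, by simpa using hm⟩
  | @step r l₁ l₂ B C v₁ x₁ v₂ x₂ d₁ d₂ n₁ n₂ k hr hout h₁ h₂ _ ih =>
    obtain ⟨_, hB⟩ := ih hm
    obtain ⟨_, hB₂⟩ := hB.append h₂
    obtain ⟨d, h⟩ := h₁.append hB₂
    rw [List.singleton_append, ← hout] at h
    refine ⟨d + 1, ?_⟩
    convert ParseForest.singleton hr h using 1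
    · simp
    · omega

end ParseContext

def ruleInputs (g : ContextFreeGrammar T) [DecidableEq g.NT] : Finset g.NT :=
  g.rules.image (·.input)

/-- `S` stands for the nonterminals already visited above the root: if fewer than `d` rule
inputs lie outside `S`, a deepest path meets `S` or repeats a nonterminal. -/
theorem ParseForest.exists_loop [DecidableEq g.NT] {A : g.NT} {w d n}
    (hA : ParseForest g [nonterminal A] w d n) (S : Finset g.NT)
    (hcard : (g.ruleInputs \ S).card < d) :
      (∃ B ∈ S, ∃ u m y k dm nm, w = u ++ m ++ y ∧ n = k + nm ∧
        ParseContext g A B u y k ∧ ParseForest g [nonterminal B] m dm nm) ∨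
      ∃ B u v m x y k k' dm nm, w = u ++ v ++ m ++ x ++ y ∧ k + nm < n ∧
        ParseContext g A B u y k ∧ ParseContext g B B v x k' ∧
        ParseForest g [nonterminal B] m dm nm := by
  induction d using Nat.strong_induction_on generalizing A w n S with
  | _ d ih =>
  by_cases hAS : A ∈ S
  · exact .inl ⟨A, hAS, [], w, [], 0, d, n, by simp, by simp, .refl A, hA⟩
  obtain ⟨r, hr, rfl, d₀, n₀, hout, rfl, rfl⟩ := hA.singleton_inv
  have hcard' : (g.ruleInputs \ insert r.input S).card < d₀ := by
    have hmem : r.input ∈ g.ruleInputs \ S :=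
      Finset.mem_sdiff.2 ⟨Finset.mem_image_of_mem _ hr, hAS⟩
    have := Finset.card_pos.2 ⟨_, hmem⟩
    rw [Finset.sdiff_insert, Finset.card_erase_of_mem hmem]
    omega
  obtain ⟨l₁, l₂, B, w₁, wm, w₂, nm, d₁, n₁, d₂, n₂, hl, rfl, rfl, hB, h₁, h₂⟩ :=
    hout.exists_deepest (by omega)
  have hstep : ParseContext g r.input B w₁ w₂ (1 + n₁ + n₂) := by
    simpa using ParseContext.step hr hl h₁ h₂ (.refl B)
  rcases ih d₀ (by omega) hB (insert r.input S) hcard' with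
    ⟨C, hC, u, m, y, k, dm, nm, rfl, rfl, hBC, hm⟩ |
    ⟨C, u, v, m, x, y, k, k', dm, nm', rfl, hlt, hBC, hCC, hm⟩
  · rcases Finset.mem_insert.1 hC with rfl | hC
    · exact .inr ⟨_, [], w₁ ++ u, m, y ++ w₂, [], 0, _, dm, nm, by simp, by omega,
        .refl _, hstep.trans hBC, hm⟩
    · exact .inl ⟨C, hC, w₁ ++ u, m, y ++ w₂, _, dm, nm, by simp, by omega,
        hstep.trans hBC, hm⟩
  · exact .inr ⟨C, w₁ ++ u, v, m, x, y ++ w₂, _, k', dm, nm', by simp, by omega,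
      hstep.trans hBC, hCC, hm⟩

theorem pumping_lemma (g : ContextFreeGrammar T) :
    ∃ K, ∀ w ∈ g.language, K ≤ w.length →
      ∃ u v m x y : List T, w = u ++ v ++ m ++ x ++ y ∧ v ++ x ≠ [] ∧
        u ++ (v ++ v) ++ m ++ (x ++ x) ++ y ∈ g.language := by
  classical
  refine ⟨g.branchingBound ^ g.ruleInputs.card + 1, fun w hw hlen => ?_⟩
  have hex : ∃ n d, ParseForest g [nonterminal g.initial] w d n := by
    obtain ⟨d, n, h⟩ := mem_language_iff_exists_parseForest.1 hw
    exact ⟨n, d, h⟩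
  obtain ⟨d, htree⟩ := Nat.find_spec hex
  have hdepth : (g.ruleInputs \ ∅).card < d := by
    rw [Finset.sdiff_empty]
    by_contra! hd
    have hyield := htree.length_le
    rw [List.length_singleton, one_mul] at hyield
    have := Nat.pow_le_pow_right (one_le_branchingBound (g := g)) hd
    omega
  obtain ⟨_, ⟨⟩, _⟩ | ⟨B, u, v, m, x, y, k, k', dm, nm, rfl, hlt, hAB, hBB, hm⟩ :=
    htree.exists_loop ∅ hdepth
  refine ⟨u, v, m, x, y, rfl, fun hvx => ?_, ?_⟩
  · obtain ⟨rfl, rfl⟩ := List.append_eq_nil_iff.1 hvx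
    obtain ⟨d', h⟩ := hAB.plug hm
    exact Nat.find_min hex hlt ⟨d', by simpa using h⟩
  · obtain ⟨_, hBm⟩ := (hBB.trans hBB).plug hm
    obtain ⟨_, h⟩ := hAB.plug hBm
    exact mem_language_iff_exists_parseForest.2 ⟨_, _, by simpa using h⟩

end ContextFreeGrammar

theorem List.Pairwise.eq_of_append_self {α : Type*} [PartialOrder α] {v : List α}
    (h : (v ++ v).Pairwise (· ≤ ·)) {a b : α} (ha : a ∈ v) (hb : b ∈ v) : a = b :=
  have hle := (List.pairwise_append.1 h).2.2
  le_antisymm (hle a ha b hb) (hle b hb a ha)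

theorem exists_notMem_append_of_forall_eq {α : Type*} [Fintype α] (hα : 2 < Fintype.card α)
    {v x : List α} (hv : ∀ a ∈ v, ∀ b ∈ v, a = b) (hx : ∀ a ∈ x, ∀ b ∈ x, a = b) :
    ∃ c, c ∉ v ++ x := by
  classical
  by_contra! hall
  obtain ⟨a, b, hab, hsame⟩ :=
    Fintype.exists_ne_map_eq_of_card_lt (fun c => decide (c ∈ v)) (by simpa using hα)
  by_cases ha : a ∈ v
  · exact hab (hv a ha b (by simpa [ha] using hsame))
  · have hb : b ∉ v := by simpa [ha] using hsame
    exact hab (hx a (by simpa [ha] using hall a) b (by simpa [hb] using hall b))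

/-- L_3eq = { 0ⁿ 1ⁿ 2ⁿ : n ≥ 1 } over the alphabet {0,1,2} (as `Fin 3`). -/
def L3eq : Language (Fin 3) :=
  {s | ∃ n : ℕ, 1 ≤ n ∧
    s = List.replicate n 0 ++ List.replicate n 1 ++ List.replicate n 2}

theorem L3eq_infinite : (L3eq : Set (List (Fin 3))).Infinite := by
  refine Set.infinite_of_injective_forall_mem (f := fun n : ℕ =>
    List.replicate (n + 1) 0 ++ List.replicate (n + 1) 1 ++ List.replicate (n + 1) 2)
    (fun a b hab => ?_) (fun n => ⟨n + 1, by omega, rfl⟩)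
  have := congrArg List.length hab
  simp only [List.length_append, List.length_replicate] at this
  omega

theorem pairwise_le_of_mem_L3eq {w : List (Fin 3)} (hw : w ∈ L3eq) : w.Pairwise (· ≤ ·) := by
  obtain ⟨n, -, rfl⟩ := hw
  simp [List.pairwise_append, List.pairwise_replicate]

theorem count_eq_of_mem_L3eq {w : List (Fin 3)} (hw : w ∈ L3eq) (a b : Fin 3) :
    w.count a = w.count b := by
  obtain ⟨n, -, rfl⟩ := hw
  fin_cases a <;> fin_cases b <;> simp [List.count_replicate]

theorem pump_notMem_L3eq {u v m x y : List (Fin 3)} (hw : u ++ v ++ m ++ x ++ y ∈ L3eq)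
    (hvx : v ++ x ≠ []) : u ++ (v ++ v) ++ m ++ (x ++ x) ++ y ∉ L3eq := by
  intro hp
  have hsorted := pairwise_le_of_mem_L3eq hp
  have hvv : v ++ v <:+: u ++ (v ++ v) ++ m ++ (x ++ x) ++ y :=
    ⟨u, m ++ (x ++ x) ++ y, by simp⟩
  have hxx : x ++ x <:+: u ++ (v ++ v) ++ m ++ (x ++ x) ++ y := ⟨u ++ (v ++ v) ++ m, y, rfl⟩
  have hv : ∀ a ∈ v, ∀ b ∈ v, a = b := fun a ha b hb =>
    (hsorted.sublist hvv.sublist).eq_of_append_self ha hb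
  have hx : ∀ a ∈ x, ∀ b ∈ x, a = b := fun a ha b hb =>
    (hsorted.sublist hxx.sublist).eq_of_append_self ha hb
  obtain ⟨c, hc⟩ := exists_notMem_append_of_forall_eq (by simp) hv hx
  obtain ⟨a, ha⟩ := List.exists_mem_of_ne_nil _ hvx
  have hcount : ∀ b : Fin 3, (u ++ (v ++ v) ++ m ++ (x ++ x) ++ y).count b =
      (u ++ v ++ m ++ x ++ y).count b + (v ++ x).count b := by
    intro b
    simp only [List.count_append]
    omega
  have hw_ac := count_eq_of_mem_L3eq hw a c
  have hp_ac := count_eq_of_mem_L3eq hp a c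
  have hpump_a := hcount a
  have hpump_c := hcount c
  have ha_pos := List.count_pos_iff.2 ha
  have hc_zero := List.count_eq_zero.2 hc
  omega

/-- L_3eq is CFL-immune. -/
theorem L3eq_CFLImmune : CFLImmune L3eq := by
  refine ⟨L3eq_infinite, ?_⟩
  rintro M hML hMinf ⟨g, rfl⟩
  obtain ⟨K, hK⟩ := g.pumping_lemma
  obtain ⟨w, hw, hlen⟩ := hMinf.exists_notMem_finite (List.finite_length_lt (Fin 3) K)
  obtain ⟨u, v, m, x, y, rfl, hvx, hpump⟩ := hK w hw (not_lt.1 hlen)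
  exact pump_notMem_L3eq (hML hw) hvx (hML hpump)
end
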